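/- If T = (A,B,C) and T' = (A',B',C') are nice and concordant triples, then the compound T'' = T⊗T' is nice; moreover α(T'') = α(T)+1 = α(T')+1, β(T'') = β(T)+β(T')+1, δ(T'') = δ(T)+δ(T')−α(T)+2, g(T'') = g(T)+g(T'), and n(T'') = n(T)+n(T')+g(T)·g(T'). -/

import Mathlib

/-- The three-letter alphabet `S = {0, 1, ∗}`. -/
inductive Tern | zero | one | star
deriving DecidableEq, Repr

/-- A string over `S`. -/
abbrev Str := List Tern

/-- A (ordered) list of strings over `S`. -/
abbrev SList := List Str

/-- `clash x y` is true iff both `x, y ∈ {0,1}` and `x ≠ y`. -/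
def clash : Tern → Tern → Bool
  | Tern.zero, Tern.one => true
  | Tern.one, Tern.zero => true
  | _, _ => false

/-- `dist u v`: the number of positions where both letters are binary and differ. -/
def distS (u v : Str) : ℕ := (u.zip v).countP (fun p => clash p.1 p.2)

/-- all strings of a list have length `m` -/
def uniform (L : SList) (m : ℕ) : Prop := ∀ s ∈ L, s.length = m

/-- A list is `k`-neighborly if any two entries occupying distinct positions `u, v`
satisfy `1 ≤ dist(u,v) ≤ k`. -/
def kNbr (k : ℕ) (L : SList) : Prop :=
  L.Pairwise (fun u v => 1 ≤ distS u v ∧ distS u v ≤ k)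

/-- The pairing `A ⊖ B`: entrywise concatenation of strings. -/
def pairL (A B : SList) : SList := List.zipWith (· ++ ·) A B

/-- The concatenation `AB = [v_i w_j]`, ordered lexicographically in `(i,j)`. -/
def concL (A B : SList) : SList := A.flatMap (fun u => B.map (fun v => u ++ v))

/-- the string `∗^m` of `m` jokers -/
def stars (m : ℕ) : Str := List.replicate m Tern.star

/-- A triple of lists `T = (A,B,C)` together with the (intended common) string
lengths `a` of the entries of `A` and `b` of the entries of `B` (and `C`). -/
structure Triple where
  a : ℕ
  b : ℕ
  A : SList
  B : SList
  C : SList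

namespace Triple

/-- `α(T)`: the common length of the strings of `A`. -/
def alpha (T : Triple) : ℕ := T.a

/-- `β(T)`: the common length of the strings of `B`. -/
def beta (T : Triple) : ℕ := T.b

/-- `δ(T) = α(T) + β(T)`. -/
def delta (T : Triple) : ℕ := T.a + T.b

/-- `n(T) = |A|`. -/
def nT (T : Triple) : ℕ := T.A.length

/-- `g(T) = |C|`. -/
def gT (T : Triple) : ℕ := T.C.length

/-- A triple `T = (A,B,C)` is nice if: (1) `dist(u,v) ≤ 1` for all entries `u,v` of `A`;
(2) `|A| = |B|` and `A ⊖ B` is 2-neighborly; (3) `C` is a 1-neighborly sublist of `B`,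
and `dist(u,v) ≤ 1` for every entry `u` of `B` and every entry `v` of `C`.
(The strings of `A` all have length `α(T)` and those of `B` length `β(T)`.) -/
def Nice (T : Triple) : Prop :=
  uniform T.A T.a ∧ uniform T.B T.b ∧
  (∀ u ∈ T.A, ∀ v ∈ T.A, distS u v ≤ 1) ∧
  T.A.length = T.B.length ∧
  kNbr 2 (pairL T.A T.B) ∧
  T.C.Sublist T.B ∧ kNbr 1 T.C ∧
  (∀ u ∈ T.B, ∀ v ∈ T.C, distS u v ≤ 1)

/-- `T, T'` are concordant if `α(T) = α(T')` and `dist(u,v) ≤ 1` for all entries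
`u, v` of `A + A'`. -/
def Concordant (T T' : Triple) : Prop :=
  T.a = T'.a ∧ ∀ u ∈ T.A ++ T'.A, ∀ v ∈ T.A ++ T'.A, distS u v ≤ 1

/-- The compound `T ⊗ T' = (A'', B'', C'')` where
`A'' = [0]A + [0]A' + (|C|·|C'|)·([1][∗^{α(T)}])`,
`B'' = [0]B[∗^{β(T')}] + [1][∗^{β(T)}]B' + [∗]CC'`,
`C'' = [0]C[∗^{β(T')}] + [1][∗^{β(T)}]C'`. -/
def compound (T T' : Triple) : Triple where
  a := T.a + 1
  b := T.b + T'.b + 1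
  A := (T.A.map (fun u => Tern.zero :: u)) ++ (T'.A.map (fun u => Tern.zero :: u)) ++
       List.replicate (T.C.length * T'.C.length) (Tern.one :: stars T.a)
  B := (T.B.map (fun u => Tern.zero :: (u ++ stars T'.b))) ++
       (T'.B.map (fun u => Tern.one :: (stars T.b ++ u))) ++
       ((concL T.C T'.C).map (fun u => Tern.star :: u))
  C := (T.C.map (fun u => Tern.zero :: (u ++ stars T'.b))) ++
       (T'.C.map (fun u => Tern.one :: (stars T.b ++ u)))

/-- `T, T'` are congruent if they are concordant, `β(T) = β(T')`, `n(T) = n(T')`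
and `g(T) = g(T')`. -/
def Congruent (T T' : Triple) : Prop :=
  Concordant T T' ∧ T.b = T'.b ∧ T.A.length = T'.A.length ∧ T.C.length = T'.C.length

end Triple

/-!
Every entry of `T ⊗ T'` carries a new leading letter recording its block: `0` or `1` in `A''`
and `0`, `1` or `∗` in `B''` and `C''`, followed by entries of `T` and `T'` padded by jokers.
Jokers never clash, so the distance between two entries of the compound is the clash of their
leading letters plus distances between entries of `A, A', B, B', C, C'`. Each condition of
niceness for `T ⊗ T'` thus follows from those for `T` and `T'`, concordance supplying the bound
between `A` and `A'`.
-/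

@[simp] lemma length_stars (m : ℕ) : (stars m).length = m := List.length_replicate

@[simp] lemma distS_cons_cons (x y : Tern) (u v : Str) :
    distS (x :: u) (y :: v) = distS u v + if clash x y then 1 else 0 := by
  simp [distS, List.countP_cons]

@[simp] lemma distS_self (u : Str) : distS u u = 0 := by
  induction u with
  | nil => rfl
  | cons x u ih => cases x <;> simp [ih, clash]

@[simp] lemma distS_stars_left (m : ℕ) (u : Str) : distS (stars m) u = 0 := by
  refine List.countP_eq_zero.2 fun ⟨x, y⟩ hp => ?_
  rw [List.eq_of_mem_replicate (List.of_mem_zip hp).1]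
  simp [clash]

@[simp] lemma distS_stars_right (u : Str) (m : ℕ) : distS u (stars m) = 0 := by
  refine List.countP_eq_zero.2 fun ⟨x, y⟩ hp => ?_
  rw [List.eq_of_mem_replicate (List.of_mem_zip hp).2]
  cases x <;> simp [clash]

lemma distS_append {u₁ u₂ : Str} (v₁ v₂ : Str) (h : u₁.length = u₂.length) :
    distS (u₁ ++ v₁) (u₂ ++ v₂) = distS u₁ u₂ + distS v₁ v₂ := by
  rw [distS, List.zip_append h, List.countP_append]; rfl

lemma pairL_append {A₁ A₂ B₁ B₂ : SList} (h : A₁.length = B₁.length) :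
    pairL (A₁ ++ A₂) (B₁ ++ B₂) = pairL A₁ B₁ ++ pairL A₂ B₂ :=
  List.zipWith_append h

lemma pairL_map_map (A B : SList) (f g : Str → Str) :
    pairL (A.map f) (B.map g) = (A.zip B).map fun p => f p.1 ++ g p.2 := by
  rw [pairL, List.zipWith_map, ← List.map_uncurry_zip_eq_zipWith]; rfl

lemma pairL_eq_map_zip (A B : SList) : pairL A B = (A.zip B).map fun p => p.1 ++ p.2 := by
  simpa using pairL_map_map A B id id

lemma pairL_replicate_left (x : Str) {n : ℕ} {B : SList} (h : B.length = n) :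
    pairL (List.replicate n x) B = B.map (x ++ ·) := by
  subst h
  induction B with
  | nil => rfl
  | cons w B ih => simpa [pairL, List.replicate_succ] using ih

lemma length_concL (C C' : SList) : (concL C C').length = C.length * C'.length := by
  simp [concL, List.length_flatMap, List.sum_replicate]

lemma mem_concL {w : Str} {C C' : SList} : w ∈ concL C C' ↔ ∃ c ∈ C, ∃ c' ∈ C', w = c ++ c' := by
  simp [concL, eq_comm]

lemma kNbr.mono {k l : ℕ} {L : SList} (hkl : k ≤ l) (h : kNbr k L) : kNbr l L :=
  h.imp fun huv => ⟨huv.1, huv.2.trans hkl⟩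

lemma kNbr.map_of_distS_eq {α : Type*} {k : ℕ} {L : List α} {f g : α → Str}
    (hfg : ∀ a ∈ L, ∀ b ∈ L, distS (f a) (f b) = distS (g a) (g b)) (h : kNbr k (L.map g)) :
    kNbr k (L.map f) :=
  List.pairwise_map.2 ((List.pairwise_map.1 h).imp_of_mem fun ha hb hab => hfg _ ha _ hb ▸ hab)

lemma kNbr.map {k : ℕ} {L : SList} {f : Str → Str}
    (hf : ∀ u ∈ L, ∀ v ∈ L, distS (f u) (f v) = distS u v) (h : kNbr k L) : kNbr k (L.map f) :=
  kNbr.map_of_distS_eq (g := id) hf (by rwa [List.map_id])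

lemma kNbr_two_concL {m : ℕ} {C C' : SList} (hCm : uniform C m) (hC : kNbr 1 C)
    (hC' : kNbr 1 C') (hC'_le : ∀ u ∈ C', ∀ v ∈ C', distS u v ≤ 1) : kNbr 2 (concL C C') := by
  rw [kNbr, concL, List.pairwise_flatMap]
  refine ⟨fun c _ => (hC'.mono one_le_two).map fun u _ v _ => by simp [distS_append], ?_⟩
  refine hC.imp_of_mem fun {c₁ c₂} hc₁ hc₂ hc => ?_
  simp only [List.forall_mem_map]
  intro c₁' hc₁' c₂' hc₂'
  rw [distS_append _ _ (by rw [hCm _ hc₁, hCm _ hc₂])]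
  have := hC'_le _ hc₁' _ hc₂'
  omega

namespace Triple

variable {T T' : Triple}

lemma Nice.uniform_C (hT : Nice T) : uniform T.C T.b :=
  let ⟨_, hB, _, _, _, hCB, _⟩ := hT
  fun s hs => hB s (hCB.subset hs)

lemma mem_compound_A {s : Str} (hs : s ∈ (compound T T').A) :
    (∃ u ∈ T.A ++ T'.A, s = Tern.zero :: u) ∨ s = Tern.one :: stars T.a := by
  simp only [compound, List.mem_append, List.mem_map, List.mem_replicate] at hs
  aesop

lemma mem_compound_B {s : Str} (hs : s ∈ (compound T T').B) :
    (∃ w ∈ T.B, s = Tern.zero :: (w ++ stars T'.b)) ∨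
    (∃ w ∈ T'.B, s = Tern.one :: (stars T.b ++ w)) ∨
    (∃ c ∈ T.C, ∃ c' ∈ T'.C, s = Tern.star :: (c ++ c')) := by
  simp only [compound, List.mem_append, List.mem_map, mem_concL] at hs
  aesop

lemma mem_compound_C {s : Str} (hs : s ∈ (compound T T').C) :
    (∃ c ∈ T.C, s = Tern.zero :: (c ++ stars T'.b)) ∨
    (∃ c ∈ T'.C, s = Tern.one :: (stars T.b ++ c)) := by
  simp only [compound, List.mem_append, List.mem_map] at hs
  aesop

lemma uniform_compound_A (hA : uniform T.A T.a) (hA' : uniform T'.A T'.a) (ha : T.a = T'.a) :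
    uniform (compound T T').A (compound T T').a := by
  intro s hs
  rcases mem_compound_A hs with ⟨u, hu, rfl⟩ | rfl
  · rcases List.mem_append.1 hu with hu | hu
    · simp [compound, hA u hu]
    · simp [compound, hA' u hu, ha]
  · simp [compound]

lemma uniform_compound_B (hT : Nice T) (hT' : Nice T') :
    uniform (compound T T').B (compound T T').b := by
  intro s hs
  rcases mem_compound_B hs with ⟨w, hw, rfl⟩ | ⟨w, hw, rfl⟩ | ⟨c, hc, c', hc', rfl⟩
  · simp [compound, hT.2.1 w hw]
  · simp [compound, hT'.2.1 w hw]
  · simp [compound, hT.uniform_C c hc, hT'.uniform_C c' hc']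

lemma distS_compound_A_le_one (h : Concordant T T') :
    ∀ u ∈ (compound T T').A, ∀ v ∈ (compound T T').A, distS u v ≤ 1 := by
  intro u hu v hv
  rcases mem_compound_A hu with ⟨x, hx, rfl⟩ | rfl <;>
    rcases mem_compound_A hv with ⟨y, hy, rfl⟩ | rfl
  · simpa [clash] using h.2 x hx y hy
  all_goals simp [clash]

lemma length_compound_A_eq_B (hAB : T.A.length = T.B.length)
    (hAB' : T'.A.length = T'.B.length) :
    (compound T T').A.length = (compound T T').B.length := by
  simp [compound, hAB, hAB', length_concL]

lemma compound_C_sublist_B (hCB : T.C.Sublist T.B) (hCB' : T'.C.Sublist T'.B) :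
    (compound T T').C.Sublist (compound T T').B :=
  ((hCB.map _).append (hCB'.map _)).trans (List.sublist_append_left _ _)

lemma kNbr_compound_C (hT : Nice T) (hT' : Nice T') : kNbr 1 (compound T T').C := by
  have hCu := hT.uniform_C
  obtain ⟨-, -, -, -, -, -, hC, -⟩ := hT
  obtain ⟨-, -, -, -, -, -, hC', -⟩ := hT'
  rw [compound, kNbr, List.pairwise_append]
  refine ⟨hC.map fun u hu v hv => ?_, hC'.map fun u _ v _ => ?_, ?_⟩
  · simp [distS_append, hCu u hu, hCu v hv, clash]
  · simp [distS_append, clash]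
  · simp only [List.forall_mem_map]
    intro u hu v _
    simp [distS_append, hCu u hu, clash]

lemma distS_compound_B_C_le_one (hT : Nice T) (hT' : Nice T') :
    ∀ u ∈ (compound T T').B, ∀ v ∈ (compound T T').C, distS u v ≤ 1 := by
  have hC := hT.uniform_C
  obtain ⟨-, hB, -, -, -, hCB, -, hBC⟩ := hT
  obtain ⟨-, -, -, -, -, hCB', -, hBC'⟩ := hT'
  intro u hu v hv
  rcases mem_compound_C hv with ⟨c, hc, rfl⟩ | ⟨c, hc, rfl⟩ <;>
    rcases mem_compound_B hu with ⟨w, hw, rfl⟩ | ⟨w, hw, rfl⟩ | ⟨d, hd, d', hd', rfl⟩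
  · simpa [distS_append, hB w hw, hC c hc, clash] using hBC w hw c hc
  · simp [distS_append, hC c hc, clash]
  · simpa [distS_append, hC d hd, hC c hc, clash] using hBC d (hCB.subset hd) c hc
  · simp [distS_append, hB w hw, clash]
  · simpa [distS_append, clash] using hBC' w hw c hc
  · simpa [distS_append, hC d hd, clash] using hBC' d' (hCB'.subset hd') c hc

lemma pairL_compound (hAB : T.A.length = T.B.length) (hAB' : T'.A.length = T'.B.length) :
    pairL (compound T T').A (compound T T').B =
      (T.A.zip T.B).map (fun p => (Tern.zero :: p.1) ++ Tern.zero :: (p.2 ++ stars T'.b)) ++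
      (T'.A.zip T'.B).map (fun p => (Tern.zero :: p.1) ++ Tern.one :: (stars T.b ++ p.2)) ++
      (concL T.C T'.C).map (fun w => (Tern.one :: stars T.a) ++ Tern.star :: w) := by
  rw [compound, pairL_append (by simp [hAB, hAB']), pairL_append (by simp [hAB]),
    pairL_map_map, pairL_map_map, pairL_replicate_left _ (by simp [length_concL]), List.map_map]
  rfl

lemma kNbr_pairL_compound (hT : Nice T) (hT' : Nice T') (h : Concordant T T') :
    kNbr 2 (pairL (compound T T').A (compound T T').B) := by
  have hCu := hT.uniform_C
  obtain ⟨hA, hB, -, hAB, hk, -, hC, hBC⟩ := hT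
  obtain ⟨hA', -, -, hAB', hk', hCB', hC', hBC'⟩ := hT'
  obtain ⟨ha, hAA'⟩ := h
  rw [pairL_eq_map_zip] at hk hk'
  rw [pairL_compound hAB hAB', kNbr, List.pairwise_append, List.pairwise_append]
  -- Across blocks the leading letters of the `A''`-part or of the `B''`-part clash exactly once;
  -- concordance, resp. condition (3), bounds the rest by one.
  refine ⟨⟨?_, ?_, ?_⟩, ?_, ?_⟩
  · refine hk.map_of_distS_eq fun p hp q hq => ?_
    simp [distS_append, hA _ (List.of_mem_zip hp).1, hA _ (List.of_mem_zip hq).1,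
      hB _ (List.of_mem_zip hp).2, hB _ (List.of_mem_zip hq).2, clash]
  · refine hk'.map_of_distS_eq fun p hp q hq => ?_
    simp [distS_append, hA' _ (List.of_mem_zip hp).1, hA' _ (List.of_mem_zip hq).1, clash]
  · simp only [List.forall_mem_map]
    intro p hp q hq
    have := hAA' p.1 (List.mem_append_left _ (List.of_mem_zip hp).1)
      q.1 (List.mem_append_right _ (List.of_mem_zip hq).1)
    simp [distS_append, hA _ (List.of_mem_zip hp).1, hA' _ (List.of_mem_zip hq).1,
      hB _ (List.of_mem_zip hp).2, ha, clash]
    omega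
  · refine (kNbr_two_concL hCu hC hC' fun u hu v hv => hBC' u (hCB'.subset hu) v hv).map ?_
    intro u _ v _
    simp [distS_append, clash]
  · simp only [List.forall_mem_append, List.forall_mem_map, mem_concL]
    refine ⟨fun p hp w hw => ?_, fun p hp w hw => ?_⟩ <;>
      obtain ⟨c, hc, c', hc', rfl⟩ := hw
    · have := hBC p.2 (List.of_mem_zip hp).2 c hc
      simp [distS_append, hA _ (List.of_mem_zip hp).1, hB _ (List.of_mem_zip hp).2, hCu c hc,
        clash]
      omega
    · have := hBC' p.2 (List.of_mem_zip hp).2 c' hc'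
      simp [distS_append, hA' _ (List.of_mem_zip hp).1, hCu c hc, ha, clash]
      omega

theorem Nice.compound (hT : Nice T) (hT' : Nice T') (h : Concordant T T') :
    Nice (compound T T') := by
  have ⟨hA, _, _, hAB, _, hCB, _⟩ := hT
  have ⟨hA', _, _, hAB', _, hCB', _⟩ := hT'
  exact ⟨uniform_compound_A hA hA' h.1, uniform_compound_B hT hT', distS_compound_A_le_one h,
    length_compound_A_eq_B hAB hAB', kNbr_pairL_compound hT hT' h,
    compound_C_sublist_B hCB hCB', kNbr_compound_C hT hT', distS_compound_B_C_le_one hT hT'⟩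

end Triple

open Triple in
/-- If `T, T'` are nice and concordant, then `T'' = T ⊗ T'` is nice; moreover
`α(T'') = α(T)+1 = α(T')+1`, `β(T'') = β(T)+β(T')+1`, `δ(T'') = δ(T)+δ(T')−α(T)+2`,
`g(T'') = g(T)+g(T')` and `n(T'') = n(T)+n(T')+g(T)·g(T')`. -/
theorem compound_nice_and_params (T T' : Triple) (hT : Nice T) (hT' : Nice T')
    (h : Concordant T T') :
    Nice (compound T T') ∧
    alpha (compound T T') = alpha T + 1 ∧
    alpha (compound T T') = alpha T' + 1 ∧
    beta (compound T T') = beta T + beta T' + 1 ∧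
    delta (compound T T') = delta T + delta T' - alpha T + 2 ∧
    gT (compound T T') = gT T + gT T' ∧
    nT (compound T T') = nT T + nT T' + gT T * gT T' := by
  have ha : T.a = T'.a := h.1
  refine ⟨hT.compound hT' h, rfl, by simp [alpha, compound, ha], rfl, ?_, ?_, ?_⟩
  · simp only [delta, alpha, compound]
    omega
  · simp [gT, compound]
  · simp [nT, gT, compound, add_assoc]
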